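/- Let n ≥ 1, let R : ℝ → Matrix (Fin n) (Fin n) ℝ be continuous with R(t) symmetric for every t, let α ≥ 1 and t > 0. Let S be a Lagrangian Jacobi solution along R with S(0) = 1 such that S(u) is invertible and ‖S(u) x‖ ≤ α ‖x‖ for all u ∈ [0, t] and all x ∈ ℝⁿ, and let S_t be the Jacobi solution along R with S_t(0) = 1 and S_t(t) = 0. Then for every x ∈ ℝⁿ, ⟨(S'(0) − S_t'(0)) x, x⟩ ≤ (α² / t) ⟨x, x⟩. -/

import Mathlib

open Matrix MeasureTheory

attribute [local instance] Matrix.normedAddCommGroup Matrix.normedSpace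

/-- A Jacobi solution along `R`: a twice continuously differentiable matrix-valued
map `Y` satisfying `Y'' + R Y = 0`. -/
def IsJacobi {n : ℕ} (R Y : ℝ → Matrix (Fin n) (Fin n) ℝ) : Prop :=
  ContDiff ℝ 2 Y ∧ ∀ t : ℝ, deriv (deriv Y) t + R t * Y t = 0

/-- A Lagrangian (self-conjugate) solution: the Wronskian `W(Y,Y)` vanishes. -/
def IsLagrangian {n : ℕ} (Y : ℝ → Matrix (Fin n) (Fin n) ℝ) : Prop :=
  ∀ t : ℝ, (deriv Y t)ᵀ * Y t = (Y t)ᵀ * deriv Y t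

/-- The Euclidean norm on `ℝⁿ`. -/
noncomputable def euclNorm {n : ℕ} (x : Fin n → ℝ) : ℝ :=
  Real.sqrt (x ⬝ᵥ x)

/-!
Put `W = S'(0) − S_t'(0)`. The Wronskian `S'ᵀ S_t − Sᵀ S_t'` of the two Jacobi solutions is
constant, and equals `W` because `S'(0)` is symmetric. As `S` is Lagrangian, this gives
`(S⁻¹ S_t)' = −(SᵀS)⁻¹ W` wherever `S` is invertible. Hence, for `y = W x`, the function
`φ(u) = ⟨y, S(u)⁻¹ S_t(u) x⟩` goes from `⟨y, x⟩` at `0` to `0` at `t` with slope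
`−⟨y, (SᵀS)⁻¹ y⟩ ≤ −‖y‖²/α²`. So `t ‖y‖²/α² ≤ ⟨y, x⟩`, which forces `⟨y, x⟩ ≤ α² ‖x‖²/t`.
-/

open Filter Topology

section MatrixCalculus

variable {𝕜 : Type*} [NontriviallyNormedField 𝕜] {l m p : Type*} [Fintype p] {x : 𝕜}

theorem hasDerivAt_matrix_iff {A : 𝕜 → Matrix m p 𝕜} {A' : Matrix m p 𝕜} [Fintype m] :
    HasDerivAt A A' x ↔ ∀ i j, HasDerivAt (fun u => A u i j) (A' i j) x :=
  hasDerivAt_pi.trans (forall_congr' fun _ => hasDerivAt_pi)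

variable [Fintype l] [Fintype m]

theorem HasDerivAt.matrix_mul {A : 𝕜 → Matrix l m 𝕜} {B : 𝕜 → Matrix m p 𝕜}
    {A' : Matrix l m 𝕜} {B' : Matrix m p 𝕜} (hA : HasDerivAt A A' x) (hB : HasDerivAt B B' x) :
    HasDerivAt (fun u => A u * B u) (A' * B x + A x * B') x := by
  rw [hasDerivAt_matrix_iff] at hA hB ⊢
  intro i j
  simpa only [Matrix.add_apply, mul_apply, Finset.sum_add_distrib] using
    HasDerivAt.fun_sum (A := fun k u => A u i k * B u k j) fun k _ => (hA i k).mul (hB k j)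

theorem HasDerivAt.matrix_transpose {A : 𝕜 → Matrix m p 𝕜} {A' : Matrix m p 𝕜}
    (hA : HasDerivAt A A' x) : HasDerivAt (fun u => (A u)ᵀ) A'ᵀ x := by
  rw [hasDerivAt_matrix_iff] at hA ⊢
  exact fun i j => hA j i

theorem HasDerivAt.dotProduct_mulVec {A : 𝕜 → Matrix m p 𝕜} {A' : Matrix m p 𝕜}
    (hA : HasDerivAt A A' x) (v : m → 𝕜) (w : p → 𝕜) :
    HasDerivAt (fun u => v ⬝ᵥ (A u *ᵥ w)) (v ⬝ᵥ (A' *ᵥ w)) x := by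
  rw [hasDerivAt_matrix_iff] at hA
  simp only [dotProduct, mulVec]
  exact HasDerivAt.fun_sum fun i _ => (HasDerivAt.fun_sum fun j _ =>
    (hA i j).mul_const (w j)).const_mul (v i)

theorem HasDerivAt.matrix_inv [DecidableEq m] {A : 𝕜 → Matrix m m 𝕜} {A' : Matrix m m 𝕜}
    (hA : HasDerivAt A A' x) (hx : IsUnit (A x).det) :
    HasDerivAt (fun u => (A u)⁻¹) (-((A x)⁻¹ * A' * (A x)⁻¹)) x := by
  have hdet : ContinuousAt Ring.inverse (A x).det := by
    rw [Ring.inverse_eq_inv']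
    exact continuousAt_inv₀ hx.ne_zero
  have hcont : ContinuousAt (fun u => (A u)⁻¹) x :=
    (continuousAt_matrix_inv _ hdet).comp hA.continuousAt
  have hunit : ∀ᶠ u in 𝓝 x, IsUnit (A u).det :=
    ((continuous_id.matrix_det.continuousAt.comp hA.continuousAt).eventually_ne
      hx.ne_zero).mono fun _ h => h.isUnit
  replace hA := hasDerivAt_iff_tendsto_slope.mp hA
  refine hasDerivAt_iff_tendsto_slope.mpr ?_
  have hlim : Tendsto (fun u => -((A u)⁻¹ * slope A x u * (A x)⁻¹)) (𝓝[≠] x)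
      (𝓝 (-((A x)⁻¹ * A' * (A x)⁻¹))) :=
    (((hcont.tendsto.mono_left nhdsWithin_le_nhds).mul hA).mul_const _).neg
  refine hlim.congr' (eventually_nhdsWithin_of_eventually_nhds (hunit.mono fun u hu => ?_))
  simp only [slope_def_module, Matrix.mul_smul, Matrix.smul_mul, ← smul_neg]
  congr 1
  rw [Matrix.mul_sub, Matrix.sub_mul, Matrix.nonsing_inv_mul _ hu, one_mul,
    Matrix.mul_assoc, Matrix.mul_nonsing_inv _ hx, mul_one, neg_sub]

end MatrixCalculus

section QuadraticForms

variable {m p : Type*} [Fintype m] [Fintype p]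

theorem dotProduct_self_nonneg_real (v : m → ℝ) : 0 ≤ v ⬝ᵥ v := by
  simpa using dotProduct_star_self_nonneg v

theorem dotProduct_self_le_of_euclNorm_le {n : ℕ} {v w : Fin n → ℝ} {α : ℝ}
    (h : euclNorm v ≤ α * euclNorm w) : v ⬝ᵥ v ≤ α ^ 2 * (w ⬝ᵥ w) := by
  have := pow_le_pow_left₀ (Real.sqrt_nonneg _) h 2
  unfold euclNorm at this
  rwa [mul_pow, Real.sq_sqrt (dotProduct_self_nonneg_real _),
    Real.sq_sqrt (dotProduct_self_nonneg_real _)] at this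

theorem transpose_mulVec_dotProduct_self_le {A : Matrix m p ℝ} {c : ℝ} (hc : 0 < c)
    (hA : ∀ v, (A *ᵥ v) ⬝ᵥ (A *ᵥ v) ≤ c * (v ⬝ᵥ v)) (w : m → ℝ) :
    (Aᵀ *ᵥ w) ⬝ᵥ (Aᵀ *ᵥ w) ≤ c * (w ⬝ᵥ w) := by
  set z := Aᵀ *ᵥ w
  have hz : z ⬝ᵥ z = w ⬝ᵥ (A *ᵥ z) := by
    rw [dotProduct_mulVec w A z, ← mulVec_transpose]
  -- expand `0 ≤ ‖c w - A z‖²`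
  have hsq := dotProduct_self_nonneg_real (c • w - A *ᵥ z)
  simp only [sub_dotProduct, dotProduct_sub, smul_dotProduct, dotProduct_smul, smul_eq_mul,
    dotProduct_comm (A *ᵥ z) w] at hsq
  nlinarith [hA z]

theorem div_le_dotProduct_inv_transpose_mul_self_mulVec {A : Matrix m m ℝ} [DecidableEq m]
    (hA : IsUnit A.det) {c : ℝ} (hc : 0 < c)
    (hbound : ∀ v, (A *ᵥ v) ⬝ᵥ (A *ᵥ v) ≤ c * (v ⬝ᵥ v)) (y : m → ℝ) :
    (y ⬝ᵥ y) / c ≤ y ⬝ᵥ ((Aᵀ * A)⁻¹ *ᵥ y) := by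
  set w := (Aᵀ * A)⁻¹ *ᵥ y
  have hy : Aᵀ *ᵥ (A *ᵥ w) = y := by
    rw [mulVec_mulVec, mulVec_mulVec, mul_nonsing_inv _ (by simpa using hA.mul hA), one_mulVec]
  have hyw : y ⬝ᵥ w = (A *ᵥ w) ⬝ᵥ (A *ᵥ w) := by
    rw [← hy, mulVec_transpose, ← dotProduct_mulVec]
  rw [hyw, div_le_iff₀ hc, mul_comm]
  simpa only [hy] using transpose_mulVec_dotProduct_self_le hc hbound (A *ᵥ w)

theorem dotProduct_le_div_of_mul_dotProduct_self_le {x y : m → ℝ} {c : ℝ} (hc : 0 < c)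
    (h : c * (y ⬝ᵥ y) ≤ y ⬝ᵥ x) : y ⬝ᵥ x ≤ (x ⬝ᵥ x) / c := by
  have hsq := dotProduct_self_nonneg_real (c • y - x)
  simp only [sub_dotProduct, dotProduct_sub, smul_dotProduct, dotProduct_smul, smul_eq_mul,
    dotProduct_comm x y] at hsq
  rw [le_div_iff₀ hc]
  nlinarith

end QuadraticForms

theorem sub_le_mul_sub_of_hasDerivAt_le {f f' : ℝ → ℝ} {a b C : ℝ} (hab : a ≤ b)
    (hf : ∀ x ∈ Set.Icc a b, HasDerivAt f (f' x) x) (hle : ∀ x ∈ Set.Icc a b, f' x ≤ C) :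
    f b - f a ≤ C * (b - a) := by
  have hint : ∀ x ∈ interior (Set.Icc a b), x ∈ Set.Icc a b := fun _ => (interior_subset ·)
  refine (convex_Icc a b).image_sub_le_mul_sub_of_deriv_le
    (fun x hx => (hf x hx).continuousAt.continuousWithinAt)
    (fun x hx => (hf x (hint x hx)).differentiableAt.differentiableWithinAt)
    (fun x hx => ?_) a ⟨le_rfl, hab⟩ b ⟨hab, le_rfl⟩ hab
  rw [(hf x (hint x hx)).deriv]
  exact hle x (hint x hx)

section Jacobi

variable {n : ℕ} {R S Y Z : ℝ → Matrix (Fin n) (Fin n) ℝ}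

noncomputable def wronskian (Y Z : ℝ → Matrix (Fin n) (Fin n) ℝ) (u : ℝ) :
    Matrix (Fin n) (Fin n) ℝ :=
  (deriv Y u)ᵀ * Z u - (Y u)ᵀ * deriv Z u

theorem IsJacobi.hasDerivAt (hY : IsJacobi R Y) (u : ℝ) : HasDerivAt Y (deriv Y u) u :=
  (hY.1.differentiable (by norm_num) u).hasDerivAt

theorem IsJacobi.hasDerivAt_deriv (hY : IsJacobi R Y) (u : ℝ) :
    HasDerivAt (deriv Y) (-(R u * Y u)) u := by
  rw [← eq_neg_of_add_eq_zero_left (hY.2 u)]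
  exact (hY.1.differentiable_deriv_two u).hasDerivAt

theorem IsJacobi.wronskian_eq (hR : ∀ u, (R u)ᵀ = R u) (hY : IsJacobi R Y) (hZ : IsJacobi R Z)
    (u v : ℝ) : wronskian Y Z u = wronskian Y Z v := by
  have hW : ∀ s, HasDerivAt (wronskian Y Z) 0 s := fun s => by
    refine HasDerivAt.congr_deriv (f := wronskian Y Z)
      (((hY.hasDerivAt_deriv s).matrix_transpose.matrix_mul (hZ.hasDerivAt s)).sub
        ((hY.hasDerivAt s).matrix_transpose.matrix_mul (hZ.hasDerivAt_deriv s))) ?_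
    simp only [transpose_neg, transpose_mul, hR s, Matrix.neg_mul, Matrix.mul_neg,
      Matrix.mul_assoc]
    abel
  exact is_const_of_deriv_eq_zero (fun s => (hW s).differentiableAt) (fun s => (hW s).deriv) u v

theorem IsLagrangian.hasDerivAt_inv_mul (hS : IsLagrangian S) {u : ℝ}
    (hSu : HasDerivAt S (deriv S u) u) (hYu : HasDerivAt Y (deriv Y u) u)
    (hdet : IsUnit (S u).det) :
    HasDerivAt (fun v => (S v)⁻¹ * Y v) (-(((S u)ᵀ * S u)⁻¹ * wronskian S Y u)) u := by
  refine (hSu.matrix_inv hdet).matrix_mul hYu |>.congr_deriv ?_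
  have hdetT : IsUnit ((S u)ᵀ * S u).det := by simpa using hdet.mul hdet
  have key : (S u)ᵀ * S u * (-((S u)⁻¹ * deriv S u * (S u)⁻¹) * Y u + (S u)⁻¹ * deriv Y u) =
      -wronskian S Y u := by
    simp only [wronskian, Matrix.mul_add, Matrix.mul_neg, Matrix.neg_mul, Matrix.mul_assoc,
      mul_nonsing_inv_cancel_left _ _ hdet]
    rw [← Matrix.mul_assoc (S u)ᵀ, ← hS u, Matrix.mul_assoc,
      mul_nonsing_inv_cancel_left _ _ hdet]
    abel
  refine (nonsing_inv_mul_cancel_left _ _ hdetT).symm.trans ?_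
  rw [key, Matrix.mul_neg]

end Jacobi

theorem upper_bound_deriv_diff_general {n : ℕ}
    (R : ℝ → Matrix (Fin n) (Fin n) ℝ)
    (hRsym : ∀ t : ℝ, (R t)ᵀ = R t)
    (α t : ℝ) (hα : 1 ≤ α) (ht : 0 < t)
    (S : ℝ → Matrix (Fin n) (Fin n) ℝ)
    (hS : IsJacobi R S) (hSL : IsLagrangian S) (hS0 : S 0 = 1)
    (hSinv : ∀ u ∈ Set.Icc (0 : ℝ) t, IsUnit (S u))
    (hSup : ∀ u ∈ Set.Icc (0 : ℝ) t, ∀ x : Fin n → ℝ,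
      euclNorm (S u *ᵥ x) ≤ α * euclNorm x)
    (St : ℝ → Matrix (Fin n) (Fin n) ℝ)
    (hSt : IsJacobi R St) (hSt0 : St 0 = 1) (hStt : St t = 0) :
    ∀ x : Fin n → ℝ,
      ((deriv S 0 - deriv St 0) *ᵥ x) ⬝ᵥ x ≤ (α ^ 2 / t) * (x ⬝ᵥ x) := by
  intro x
  set W := deriv S 0 - deriv St 0
  set y := W *ᵥ x
  have hα2 : 0 < α ^ 2 := by positivity
  have hW : ∀ u, wronskian S St u = W := fun u => by
    have hsym : (deriv S 0)ᵀ = deriv S 0 := by simpa [hS0] using hSL 0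
    rw [hS.wronskian_eq hRsym hSt u 0, wronskian, hS0, hSt0, hsym, mul_one, transpose_one,
      one_mul]
  set φ : ℝ → ℝ := fun u => y ⬝ᵥ (((S u)⁻¹ * St u) *ᵥ x)
  have hφ : ∀ u ∈ Set.Icc 0 t, HasDerivAt φ (-(y ⬝ᵥ (((S u)ᵀ * S u)⁻¹ *ᵥ y))) u :=
    fun u hu => by
      have hdet := (isUnit_iff_isUnit_det _).1 (hSinv u hu)
      refine ((hSL.hasDerivAt_inv_mul (hS.hasDerivAt u) (hSt.hasDerivAt u)
        hdet).dotProduct_mulVec y x).congr_deriv ?_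
      rw [hW u, neg_mulVec, dotProduct_neg, ← mulVec_mulVec]
  have hφ_le : ∀ u ∈ Set.Icc 0 t, -(y ⬝ᵥ (((S u)ᵀ * S u)⁻¹ *ᵥ y)) ≤ -(y ⬝ᵥ y) / α ^ 2 :=
    fun u hu => by
      rw [neg_div, neg_le_neg_iff]
      exact div_le_dotProduct_inv_transpose_mul_self_mulVec
        ((isUnit_iff_isUnit_det _).1 (hSinv u hu)) hα2
        (fun v => dotProduct_self_le_of_euclNorm_le (hSup u hu v)) y
  have hmv := sub_le_mul_sub_of_hasDerivAt_le ht.le hφ hφ_le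
  have hφ0 : φ 0 = y ⬝ᵥ x := by simp [φ, hS0, hSt0]
  have hφt : φ t = 0 := by simp [φ, hStt]
  rw [hφ0, hφt] at hmv
  calc y ⬝ᵥ x ≤ (x ⬝ᵥ x) / (t / α ^ 2) := by
        refine dotProduct_le_div_of_mul_dotProduct_self_le (by positivity) ?_
        linarith [show -(y ⬝ᵥ y) / α ^ 2 * (t - 0) = -(t / α ^ 2 * (y ⬝ᵥ y)) by ring]
    _ = α ^ 2 / t * (x ⬝ᵥ x) := by field_simp

/-- If `‖S(u)x‖ ≤ α‖x‖` on `[0, t]`, then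
`⟨(S'(0) − S_t'(0))x, x⟩ ≤ (α²/t)⟨x, x⟩`. -/
theorem upper_bound_deriv_diff {n : ℕ} (hn : 1 ≤ n)
    (R : ℝ → Matrix (Fin n) (Fin n) ℝ) (hRc : Continuous R)
    (hRsym : ∀ t : ℝ, (R t)ᵀ = R t)
    (α t : ℝ) (hα : 1 ≤ α) (ht : 0 < t)
    (S : ℝ → Matrix (Fin n) (Fin n) ℝ)
    (hS : IsJacobi R S) (hSL : IsLagrangian S) (hS0 : S 0 = 1)
    (hSinv : ∀ u ∈ Set.Icc (0 : ℝ) t, IsUnit (S u))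
    (hSup : ∀ u ∈ Set.Icc (0 : ℝ) t, ∀ x : Fin n → ℝ,
      euclNorm (S u *ᵥ x) ≤ α * euclNorm x)
    (St : ℝ → Matrix (Fin n) (Fin n) ℝ)
    (hSt : IsJacobi R St) (hSt0 : St 0 = 1) (hStt : St t = 0) :
    ∀ x : Fin n → ℝ,
      ((deriv S 0 - deriv St 0) *ᵥ x) ⬝ᵥ x ≤ (α ^ 2 / t) * (x ⬝ᵥ x) :=
  upper_bound_deriv_diff_general R hRsym α t hα ht S hS hSL hS0 hSinv hSup St hSt hSt0 hStt
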